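/- arXiv:1707.03814 — 7 statements merged into one kernel-verified Lean document; each statement's English description precedes it below -/
import Mathlib

section
/- In the localic topology on 𝕊, the closure of a singleton {s} is the set of divisors {x ∈ 𝕊 : x ∣ s}; equivalently, x specializes to y in 𝕊 if and only if y ∣ x. In particular 𝕊 is an irreducible topological space with generic point Ω = ∏_p p^∞, the supernatural number all of whose exponents are ∞ (i.e., the closure of {Ω} is all of 𝕊). -/
open Topology

/-- A supernatural number: a function from the set of primes to `ℕ∞ = ℕ ∪ {∞}`,
thought of as the formal product `∏ p ^ (s p)`. -/
def Supernatural : Type := Nat.Primes → ℕ∞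

/-- Divisibility of supernatural numbers: `s ∣ t` iff `s p ≤ t p` for every prime `p`. -/
instance : Dvd Supernatural := ⟨fun s t => ∀ p, s p ≤ t p⟩

/-- The supernatural number associated to a positive natural number,
given by its prime factorization. -/
def natToSuper (n : ℕ+) : Supernatural := fun p => ((n : ℕ).factorization p : ℕ∞)

/-- The localic topology on `𝕊`, generated by the open sets `(n) = {s : n ∣ s}`
for `n` a positive natural number. -/
def localicTopology : TopologicalSpace Supernatural :=
  .generateFrom {U | ∃ n : ℕ+, U = {s | natToSuper n ∣ s}}

attribute [instance] localicTopology

/-- The maximal supernatural number `Ω = ∏ p ^ ∞`. -/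
def Omega : Supernatural := fun _ => ⊤

/-!
The open sets `(n)` are up-sets for divisibility, hence so is every open set, which gives
`y ∣ x → x ⤳ y`. Conversely the prime-power opens `(p ^ k)` detect each exponent separately:
if `x ⤳ y` then every `k ≤ y p` satisfies `k ≤ x p`, so `y ∣ x`. Since every supernatural number
divides `Ω`, the closure of `{Ω}` is everything and `Ω` is a generic point.
-/

namespace Supernatural

theorem dvd_trans {x y z : Supernatural} (hxy : x ∣ y) (hyz : y ∣ z) : x ∣ z :=
  fun p => (hxy p).trans (hyz p)

theorem dvd_omega (x : Supernatural) : x ∣ Omega :=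
  fun _ => le_top

theorem isOpen_setOf_natToSuper_dvd (n : ℕ+) : IsOpen {s : Supernatural | natToSuper n ∣ s} :=
  TopologicalSpace.GenerateOpen.basic _ ⟨n, rfl⟩

theorem natToSuper_pow_dvd_iff (p : Nat.Primes) (k : ℕ) (s : Supernatural) :
    natToSuper ((p : ℕ+) ^ k) ∣ s ↔ (k : ℕ∞) ≤ s p := by
  have hp : (p : ℕ).Prime := p.prop
  have hval : ∀ q : Nat.Primes, natToSuper ((p : ℕ+) ^ k) q = if p = q then (k : ℕ∞) else 0 := by
    intro q
    simp only [natToSuper, PNat.pow_coe, Nat.Primes.coe_pnat_nat, hp.factorization_pow,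
      Finsupp.single_apply, Nat.Primes.coe_nat_inj]
    split_ifs <;> rfl
  refine ⟨fun h => by simpa [hval] using h p, fun h q => ?_⟩
  rw [hval q]
  split_ifs with hpq
  · exact hpq ▸ h
  · exact zero_le

theorem _root_.IsOpen.mem_of_dvd {U : Set Supernatural} (hU : IsOpen U) {x y : Supernatural}
    (hxy : x ∣ y) (hx : x ∈ U) : y ∈ U := by
  induction hU generalizing x y with
  | basic V hV =>
    obtain ⟨n, rfl⟩ := hV
    exact dvd_trans hx hxy
  | univ => trivial
  | inter V W _ _ ihV ihW => exact ⟨ihV hxy hx.1, ihW hxy hx.2⟩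
  | sUnion S _ ih =>
    obtain ⟨V, hVS, hxV⟩ := hx
    exact ⟨V, hVS, ih V hVS hxy hxV⟩

theorem specializes_iff_dvd {x y : Supernatural} : x ⤳ y ↔ y ∣ x := by
  refine ⟨fun h p => ENat.forall_natCast_le_iff_le.mp fun k hk => ?_,
    fun h => specializes_iff_forall_open.mpr fun U hU hy => hU.mem_of_dvd h hy⟩
  have hy : y ∈ {s : Supernatural | natToSuper ((p : ℕ+) ^ k) ∣ s} :=
    (natToSuper_pow_dvd_iff p k y).mpr hk
  exact (natToSuper_pow_dvd_iff p k x).mp (h.mem_open (isOpen_setOf_natToSuper_dvd _) hy)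

theorem closure_singleton (s : Supernatural) : closure {s} = {x | x ∣ s} :=
  Set.ext fun _ => specializes_iff_mem_closure.symm.trans specializes_iff_dvd

theorem closure_singleton_omega : closure {Omega} = Set.univ := by
  rw [closure_singleton]
  exact Set.eq_univ_of_forall dvd_omega

end Supernatural

open Supernatural in
theorem stmt1 :
    (∀ s : Supernatural, closure {s} = {x | x ∣ s}) ∧
    (∀ x y : Supernatural, x ⤳ y ↔ y ∣ x) ∧
    IrreducibleSpace Supernatural ∧
    closure {Omega} = Set.univ :=
  ⟨closure_singleton, fun _ _ => specializes_iff_dvd,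
    (irreducibleSpace_def _).mpr (isGenericPoint_def.mpr closure_singleton_omega).isIrreducible,
    closure_singleton_omega⟩
end

section
/- A subset S ⊆ 𝕊 is closed in the pcfb-topology if and only if the following holds: for every supernatural number s, if for every positive natural number n with n ∣ s there exists x ∈ S with n ∣ x and x ∣ s, then s ∈ S. -/
open Topology

/-- The pcfb-topology on `𝕊`, generated by the sets `{x | n ∣ x ∧ x ∣ s}`
for `n` a positive natural number and `s` a supernatural number. -/
def pcfbTopology : TopologicalSpace Supernatural :=
  .generateFrom {U | ∃ (n : ℕ+) (t : Supernatural), U = {x | natToSuper n ∣ x ∧ x ∣ t}}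

/-! The intervals `[n, t] = {x | n ∣ x ∧ x ∣ t}` contain `[1, ∞] = 𝕊` and are closed under
intersection, `[n, t] ∩ [m, u] = [lcm n m, gcd t u]`, so they form a basis of the pcfb-topology.
A point `s` has a basic neighbourhood `[n, t]` disjoint from `S` iff `[n, s]` is one, since
`[n, s] ⊆ [n, t]`; and `[n, s]` missing `S` for some `n ∣ s` is exactly the failure of the
condition in the theorem. -/

namespace Supernatural

open TopologicalSpace

theorem dvd_refl (s : Supernatural) : s ∣ s := fun _ => le_rfl

theorem dvd_trans_s4 {s t u : Supernatural} (hst : s ∣ t) (htu : t ∣ u) : s ∣ u :=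
  fun p => (hst p).trans (htu p)

theorem natToSuper_one_dvd (x : Supernatural) : natToSuper 1 ∣ x := fun p => by
  simp [natToSuper]

theorem natToSuper_lcm_dvd_iff (n m : ℕ+) (x : Supernatural) :
    natToSuper (n.lcm m) ∣ x ↔ natToSuper n ∣ x ∧ natToSuper m ∣ x := by
  have hlcm (p : Nat.Primes) : natToSuper (n.lcm m) p = max (natToSuper n p) (natToSuper m p) := by
    simp only [natToSuper, PNat.lcm_coe, Nat.factorization_lcm n.ne_zero m.ne_zero,
      Finsupp.sup_apply]
    exact Nat.mono_cast.map_max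
  simp only [Dvd.dvd, hlcm, max_le_iff, forall_and]

def dvdInterval (n : ℕ+) (t : Supernatural) : Set Supernatural :=
  {x | natToSuper n ∣ x ∧ x ∣ t}

@[simp]
theorem mem_dvdInterval {n : ℕ+} {t x : Supernatural} :
    x ∈ dvdInterval n t ↔ natToSuper n ∣ x ∧ x ∣ t :=
  Iff.rfl

noncomputable def gcd (t u : Supernatural) : Supernatural := fun p => min (t p) (u p)

theorem dvd_gcd_iff (x t u : Supernatural) : x ∣ gcd t u ↔ x ∣ t ∧ x ∣ u := by
  simp only [Dvd.dvd, gcd, le_min_iff, forall_and]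

theorem dvdInterval_inter (n m : ℕ+) (t u : Supernatural) :
    dvdInterval n t ∩ dvdInterval m u = dvdInterval (n.lcm m) (gcd t u) := by
  ext x
  rw [Set.mem_inter_iff, mem_dvdInterval, mem_dvdInterval, mem_dvdInterval,
    natToSuper_lcm_dvd_iff, dvd_gcd_iff, and_and_and_comm]

theorem isTopologicalBasis_dvdInterval :
    @IsTopologicalBasis _ pcfbTopology {U | ∃ n t, U = dvdInterval n t} := by
  refine @isTopologicalBasis_of_subbasis_of_finiteInter _ pcfbTopology _ rfl ⟨?_, ?_⟩
  · refine ⟨1, fun _ => ⊤, (Set.eq_univ_of_forall fun x => ?_).symm⟩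
    exact ⟨natToSuper_one_dvd x, fun _ => le_top⟩
  · rintro _ ⟨n, t, rfl⟩ _ ⟨m, u, rfl⟩
    exact ⟨_, _, dvdInterval_inter n m t u⟩

theorem exists_dvdInterval_mem_subset_compl_iff (s : Supernatural) (S : Set Supernatural) :
    (∃ U ∈ {U | ∃ n t, U = dvdInterval n t}, s ∈ U ∧ U ⊆ Sᶜ) ↔
      ¬∀ n : ℕ+, natToSuper n ∣ s → ∃ x ∈ S, natToSuper n ∣ x ∧ x ∣ s := by
  constructor
  · rintro ⟨_, ⟨n, t, rfl⟩, ⟨hns, hst⟩, hU⟩ hS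
    obtain ⟨x, hxS, hnx, hxs⟩ := hS n hns
    exact hU ⟨hnx, dvd_trans_s4 hxs hst⟩ hxS
  · intro hS
    push Not at hS
    obtain ⟨n, hns, hn⟩ := hS
    exact ⟨_, ⟨n, s, rfl⟩, ⟨hns, dvd_refl s⟩, fun x hx hxS => hn x hxS hx.1 hx.2⟩

end Supernatural

theorem stmt4 (S : Set Supernatural) :
    IsClosed[pcfbTopology] S ↔
      ∀ s : Supernatural,
        (∀ n : ℕ+, natToSuper n ∣ s → ∃ x ∈ S, natToSuper n ∣ x ∧ x ∣ s) → s ∈ S := by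
  rw [← @isOpen_compl_iff _ _ pcfbTopology,
    @TopologicalSpace.IsTopologicalBasis.isOpen_iff _ pcfbTopology _ _
      Supernatural.isTopologicalBasis_dvdInterval]
  exact forall_congr' fun s => by
    rw [Supernatural.exists_dvdInterval_mem_subset_compl_iff, Set.mem_compl_iff, not_imp_not]
end

section
/- For every subset S ⊆ 𝕊, the assignment K_S is a Grothendieck topology on the big cell 𝙳. That is: there exists a Grothendieck topology on the category 𝙳 whose covering sieves on an object n are exactly the sieves L on n such that for every supernatural number s ∈ S with n ∣ s there exists m ∈ L with m ∣ s. -/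
open Topology

open CategoryTheory

/-- The big cell: the category whose objects are the positive natural numbers, with a
unique morphism `m ⟶ n` whenever `n ∣ m` (the opposite of the divisibility poset). -/
def BigCell : Type := ℕ+

/-- The underlying positive natural number of an object of the big cell. -/
def BigCell.d : BigCell → ℕ+ := fun x => x

/-- The object of the big cell corresponding to a positive natural number. -/
def BigCell.of : ℕ+ → BigCell := fun x => x

/-- `m ≤ n` in the big cell iff `n ∣ m`; the induced category has a unique
morphism `m ⟶ n` whenever `n ∣ m`. -/
instance : Preorder BigCell where
  le m n := n.d ∣ m.d
  le_refl _ := dvd_refl _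
  le_trans _ _ _ hab hbc := dvd_trans hbc hab

/-! Transitivity of `K_S` is immediate by composing witnesses. For pullback stability along `m ⟶ n`,
a witness `k ∈ L` with `k ∣ s` for the sieve on `n` yields the witness `lcm k m` for its
pullback to `m`, since `lcm k m ∣ s` whenever `k ∣ s` and `m ∣ s`. -/

theorem Supernatural.dvd_trans_s6 {s t u : Supernatural} (hst : s ∣ t) (htu : t ∣ u) : s ∣ u :=
  fun p => (hst p).trans (htu p)

theorem natToSuper_dvd_natToSuper {a b : ℕ+} (h : a ∣ b) : natToSuper a ∣ natToSuper b := by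
  have hle : (a : ℕ).factorization ≤ (b : ℕ).factorization :=
    (Nat.factorization_le_iff_dvd a.ne_zero b.ne_zero).mpr (PNat.dvd_iff.mp h)
  intro p
  change ((a : ℕ).factorization p : ℕ∞) ≤ (b : ℕ).factorization p
  exact_mod_cast hle p

theorem natToSuper_lcm_dvd {a b : ℕ+} {s : Supernatural} (ha : natToSuper a ∣ s)
    (hb : natToSuper b ∣ s) : natToSuper (PNat.lcm a b) ∣ s := by
  intro p
  change (((PNat.lcm a b : ℕ+) : ℕ).factorization p : ℕ∞) ≤ s p
  rw [PNat.lcm_coe, Nat.factorization_lcm a.ne_zero b.ne_zero, Finsupp.sup_apply]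
  exact sup_le (ha p) (hb p)

namespace BigCell

theorem natToSuper_dvd_of_hom {m n : BigCell} (f : m ⟶ n) : natToSuper n.d ∣ natToSuper m.d :=
  natToSuper_dvd_natToSuper f.le

def lcm (k m : BigCell) : BigCell := of (PNat.lcm k.d m.d)

def lcmFst (k m : BigCell) : lcm k m ⟶ k := homOfLE (PNat.dvd_lcm_left k.d m.d)

def lcmSnd (k m : BigCell) : lcm k m ⟶ m := homOfLE (PNat.dvd_lcm_right k.d m.d)

theorem pullback_arrows_lcmSnd {k m n : BigCell} {L : Sieve n} {g : k ⟶ n} (hg : L.arrows g)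
    (f : m ⟶ n) : (L.pullback f).arrows (lcmSnd k m) := by
  change L.arrows (lcmSnd k m ≫ f)
  rw [Subsingleton.elim (lcmSnd k m ≫ f) (lcmFst k m ≫ g)]
  exact L.downward_closed hg _

/-- `L ∈ K_S n`. -/
def Covers (S : Set Supernatural) {n : BigCell} (L : Sieve n) : Prop :=
  ∀ s ∈ S, natToSuper n.d ∣ s → ∃ (m : BigCell) (f : m ⟶ n), L.arrows f ∧ natToSuper m.d ∣ s

variable {S : Set Supernatural}

theorem covers_top (n : BigCell) : Covers S (⊤ : Sieve n) :=
  fun _ _ hns => ⟨n, 𝟙 n, trivial, hns⟩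

theorem Covers.pullback {m n : BigCell} {L : Sieve n} (hL : Covers S L) (f : m ⟶ n) :
    Covers S (L.pullback f) := by
  intro s hs hms
  obtain ⟨k, g, hg, hks⟩ := hL s hs (Supernatural.dvd_trans_s6 (natToSuper_dvd_of_hom f) hms)
  exact ⟨lcm k m, lcmSnd k m, pullback_arrows_lcmSnd hg f, natToSuper_lcm_dvd hks hms⟩

theorem Covers.transitive {n : BigCell} {L R : Sieve n} (hL : Covers S L)
    (hR : ∀ ⦃m : BigCell⦄ ⦃f : m ⟶ n⦄, L.arrows f → Covers S (R.pullback f)) : Covers S R := by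
  intro s hs hns
  obtain ⟨m, f, hf, hms⟩ := hL s hs hns
  obtain ⟨k, g, hg, hks⟩ := hR hf s hs hms
  exact ⟨k, g ≫ f, hg, hks⟩

def topology (S : Set Supernatural) : GrothendieckTopology BigCell where
  sieves _ := {L | Covers S L}
  top_mem' := covers_top
  pullback_stable' _ _ _ f hL := hL.pullback f
  transitive' _ _ hL _ hR := hL.transitive hR

end BigCell

theorem stmt6 (S : Set Supernatural) :
    ∃ J : GrothendieckTopology BigCell, ∀ (n : BigCell) (L : Sieve n),
      L ∈ J.sieves n ↔
        ∀ s ∈ S, natToSuper n.d ∣ s →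
          ∃ (m : BigCell) (f : m ⟶ n), L.arrows f ∧ natToSuper m.d ∣ s :=
  ⟨BigCell.topology S, fun _ _ => Iff.rfl⟩
end

section
/- Let S ⊆ 𝕊 be closed in the pcfb-topology and let K_S be the associated Grothendieck topology on the big cell 𝙳. Then for every supernatural number s, the following are equivalent: (i) s ∈ S; (ii) for every positive natural number n with n ∣ s and every K_S-covering sieve L on n, there exists m ∈ L with m ∣ s. -/
open Topology

open CategoryTheory

theorem natToSuper_lcm_dvd_iff (a b : ℕ+) (x : Supernatural) :
    natToSuper (PNat.lcm a b) ∣ x ↔ natToSuper a ∣ x ∧ natToSuper b ∣ x := by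
  have hfac (p : Nat.Primes) :
      natToSuper (PNat.lcm a b) p = max (natToSuper a p) (natToSuper b p) := by
    simp only [natToSuper, PNat.lcm_coe, Nat.factorization_lcm a.ne_zero b.ne_zero,
      Finsupp.sup_apply, Nat.mono_cast.map_max]
  simp only [Dvd.dvd, hfac, max_le_iff, forall_and]

theorem natToSuper_prime_pow_dvd_iff (p : Nat.Primes) (k : ℕ) (x : Supernatural) :
    natToSuper ((p : ℕ+) ^ k) ∣ x ↔ (k : ℕ∞) ≤ x p := by
  have hfac (q : Nat.Primes) :
      natToSuper ((p : ℕ+) ^ k) q = if q = p then (k : ℕ∞) else 0 := by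
    simp [natToSuper, Nat.Primes.coe_pnat_nat, p.2.factorization, Finsupp.single_apply,
      Nat.Primes.coe_nat_inj, eq_comm]
  constructor
  · intro h
    simpa [hfac] using h p
  · intro h q
    rw [hfac]
    split_ifs with hq
    · exact hq ▸ h
    · exact zero_le

namespace Supernatural

theorem dvd_trans_s7 {a b c : Supernatural} (hab : a ∣ b) (hbc : b ∣ c) : a ∣ c :=
  fun p => (hab p).trans (hbc p)

theorem exists_prime_pow_dvd_not_dvd {u t : Supernatural} (h : ¬ u ∣ t) :
    ∃ (p : Nat.Primes) (k : ℕ),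
      natToSuper ((p : ℕ+) ^ k) ∣ u ∧ ¬ natToSuper ((p : ℕ+) ^ k) ∣ t := by
  obtain ⟨p, hp⟩ : ∃ p, t p < u p := by
    by_contra! hle
    exact h hle
  have htp : t p ≠ ⊤ := (hp.trans_le le_top).ne
  refine ⟨p, (t p).toNat + 1, ?_, ?_⟩ <;>
    rw [natToSuper_prime_pow_dvd_iff, Nat.cast_succ, ENat.natCast_toNat_eq_self.mpr htp,
      ENat.add_one_le_iff htp]
  exacts [hp, lt_irrefl _]

theorem exists_multiple_dvd_not_dvd {n : ℕ+} {u t : Supernatural}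
    (hn : natToSuper n ∣ u) (h : ¬ u ∣ t) :
    ∃ m : ℕ+, n ∣ m ∧ natToSuper m ∣ u ∧ ¬ natToSuper m ∣ t := by
  obtain ⟨p, k, hu, ht⟩ := exists_prime_pow_dvd_not_dvd h
  refine ⟨PNat.lcm n ((p : ℕ+) ^ k), PNat.dvd_lcm_left _ _,
    (natToSuper_lcm_dvd_iff _ _ _).mpr ⟨hn, hu⟩, fun hm => ht ?_⟩
  exact ((natToSuper_lcm_dvd_iff _ _ _).mp hm).2

end Supernatural

attribute [local instance] pcfbTopology

def pcfbBasis : Set (Set Supernatural) :=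
  {U | ∃ (n : ℕ+) (t : Supernatural), U = {x | natToSuper n ∣ x ∧ x ∣ t}}

theorem isTopologicalBasis_pcfbBasis : TopologicalSpace.IsTopologicalBasis pcfbBasis := by
  refine ⟨?_, ?_, rfl⟩
  · rintro _ ⟨n₁, t₁, rfl⟩ _ ⟨n₂, t₂, rfl⟩ x hx
    refine ⟨_, ⟨PNat.lcm n₁ n₂, fun p => min (t₁ p) (t₂ p), rfl⟩, ?_, fun y hy => ?_⟩
    · exact ⟨(natToSuper_lcm_dvd_iff _ _ _).mpr ⟨hx.1.1, hx.2.1⟩,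
        fun p => le_min (hx.1.2 p) (hx.2.2 p)⟩
    · obtain ⟨hn₁, hn₂⟩ := (natToSuper_lcm_dvd_iff _ _ _).mp hy.1
      exact ⟨⟨hn₁, fun p => (hy.2 p).trans (min_le_left _ _)⟩,
        ⟨hn₂, fun p => (hy.2 p).trans (min_le_right _ _)⟩⟩
  · refine Set.eq_univ_of_forall fun x => ⟨_, ⟨1, fun _ => ⊤, rfl⟩, fun p => ?_, fun _ => le_top⟩
    simp [natToSuper]

def sieveNotDvd (n : BigCell) (t : Supernatural) : Sieve n where
  arrows m _ := ¬ natToSuper m.d ∣ t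
  downward_closed hm g hg :=
    hm (Supernatural.dvd_trans_s7 (natToSuper_dvd_natToSuper (leOfHom g)) hg)

theorem exists_sieveNotDvd_arrow_dvd {n : BigCell} {u t : Supernatural}
    (hn : natToSuper n.d ∣ u) (h : ¬ u ∣ t) :
    ∃ (m : BigCell) (f : m ⟶ n), (sieveNotDvd n t).arrows f ∧ natToSuper m.d ∣ u := by
  obtain ⟨m, hnm, hmu, hmt⟩ := Supernatural.exists_multiple_dvd_not_dvd hn h
  exact ⟨BigCell.of m, homOfLE hnm, hmt, hmu⟩

theorem stmt7 (S : Set Supernatural) (hS : IsClosed[pcfbTopology] S)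
    (J : GrothendieckTopology BigCell)
    (hJ : ∀ (n : BigCell) (L : Sieve n),
      L ∈ J.sieves n ↔ ∀ s ∈ S, natToSuper n.d ∣ s →
        ∃ (m : BigCell) (f : m ⟶ n), L.arrows f ∧ natToSuper m.d ∣ s)
    (s : Supernatural) :
    s ∈ S ↔
      ∀ (n : BigCell), natToSuper n.d ∣ s → ∀ L : Sieve n, L ∈ J.sieves n →
        ∃ (m : BigCell) (f : m ⟶ n), L.arrows f ∧ natToSuper m.d ∣ s := by
  refine ⟨fun hs n hn L hL => (hJ n L).mp hL s hs hn, fun H => ?_⟩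
  by_contra hs
  obtain ⟨_, ⟨n, t, rfl⟩, ⟨hns, hst⟩, hS'⟩ :=
    isTopologicalBasis_pcfbBasis.exists_subset_of_mem_open hs hS.isOpen_compl
  have hcov : sieveNotDvd (BigCell.of n) t ∈ J.sieves (BigCell.of n) :=
    (hJ _ _).mpr fun u hu hnu => exists_sieveNotDvd_arrow_dvd hnu fun hut => hS' ⟨hnu, hut⟩ hu
  obtain ⟨m, _, hmt, hms⟩ := H _ hns _ hcov
  exact hmt (Supernatural.dvd_trans_s7 hms hst)
end

section
/- 𝕊 with the localic topology is a spectral space; explicitly: (1) 𝕊 is T0 and compact; (2) the compact open subsets form a basis of the topology; (3) the intersection of two compact open subsets is compact; (4) 𝕊 is quasi-sober, i.e., every nonempty irreducible closed subset has a generic point. -/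
open Topology

/-! The prime-power opens `(p ^ k)` read off every exponent of a supernatural number, so the
specialization order of `𝕊` is reverse divisibility. Hence the basic open `(n)` is the set of
generalizations of the point `n`, which makes it compact, and `(m) ∩ (n) = (lcm m n)` gives
quasi-separatedness. The generic point of an irreducible closed set `S` is the lcm of its
elements: a basic neighbourhood `(n)` of it is a finite intersection of opens `(p ^ k)`, each of
which meets `S`, so by irreducibility `(n)` meets `S`; as `S` is closed, the lcm lies in `S`. -/

open TopologicalSpace Set

theorem IsIrreducible.inter_biInter_nonempty {X ι : Type*} [TopologicalSpace X] {S : Set X}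
    (hS : IsIrreducible S) (P : Finset ι) {U : ι → Set X} (hU : ∀ i ∈ P, IsOpen (U i))
    (hSU : ∀ i ∈ P, (S ∩ U i).Nonempty) : (S ∩ ⋂ i ∈ P, U i).Nonempty := by
  classical
  simpa using isIrreducible_iff_sInter.1 hS (P.image U) (by simpa using hU) (by simpa using hSU)

theorem ENat.exists_natCast_le_of_le_iSup {ι : Sort*} [Nonempty ι] {f : ι → ℕ∞} {k : ℕ}
    (h : (k : ℕ∞) ≤ ⨆ i, f i) : ∃ i, (k : ℕ∞) ≤ f i := by
  cases k with
  | zero => exact ⟨Classical.arbitrary ι, by simp⟩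
  | succ m =>
    obtain ⟨i, hi⟩ := lt_iSup_iff.1 ((ENat.natCast_lt_natCast.2 m.lt_succ_self).trans_le h)
    exact ⟨i, by push_cast; exact Order.add_one_le_of_lt hi⟩

namespace Supernatural

theorem dvd_iff_forall_le {s t : Supernatural} : s ∣ t ↔ ∀ p, s p ≤ t p := Iff.rfl

theorem natToSuper_apply (n : ℕ+) (p : Nat.Primes) :
    natToSuper n p = ((n : ℕ).factorization p : ℕ∞) := rfl

theorem natToSuper_lcm_apply (m n : ℕ+) (p : Nat.Primes) :
    natToSuper (m.lcm n) p = max (natToSuper m p) (natToSuper n p) := by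
  simp [natToSuper_apply, PNat.lcm_coe, Nat.factorization_lcm m.ne_zero n.ne_zero,
    Nat.mono_cast.map_max]

theorem natToSuper_primePow_dvd_iff {p : Nat.Primes} {k : ℕ} {s : Supernatural} :
    natToSuper ((p : ℕ+) ^ k) ∣ s ↔ (k : ℕ∞) ≤ s p := by
  have hpow (q : Nat.Primes) :
      natToSuper ((p : ℕ+) ^ k) q = if p = q then (k : ℕ∞) else 0 := by
    simp [natToSuper_apply, Nat.Primes.coe_pnat_nat, p.prop.factorization, Finsupp.single_apply,
      Nat.Primes.coe_nat_inj]
  refine ⟨fun h => by simpa [hpow] using h p, fun h q => ?_⟩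
  rcases eq_or_ne p q with rfl | hpq
  · simpa [hpow] using h
  · simp [hpow, hpq]

def basicOpen (n : ℕ+) : Set Supernatural := {s | natToSuper n ∣ s}

theorem mem_basicOpen {n : ℕ+} {s : Supernatural} : s ∈ basicOpen n ↔ natToSuper n ∣ s :=
  Iff.rfl

theorem isOpen_basicOpen (n : ℕ+) : IsOpen (basicOpen n) :=
  isOpen_generateFrom_of_mem ⟨n, rfl⟩

theorem basicOpen_one : basicOpen 1 = univ :=
  eq_univ_of_forall fun _ p => by simp [natToSuper_apply]

theorem basicOpen_inter_basicOpen (m n : ℕ+) :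
    basicOpen m ∩ basicOpen n = basicOpen (m.lcm n) := by
  ext s
  simp only [mem_inter_iff, mem_basicOpen, dvd_iff_forall_le, natToSuper_lcm_apply, max_le_iff,
    forall_and]

theorem isTopologicalBasis_basicOpen : IsTopologicalBasis (range basicOpen) := by
  refine ⟨?_, ?_, ?_⟩
  · rintro _ ⟨m, rfl⟩ _ ⟨n, rfl⟩ s hs
    rw [basicOpen_inter_basicOpen] at hs ⊢
    exact ⟨_, mem_range_self _, hs, subset_rfl⟩
  · exact sUnion_eq_univ_iff.2 fun s => ⟨_, mem_range_self 1, basicOpen_one ▸ mem_univ s⟩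
  · exact congrArg generateFrom (ext fun _ => exists_congr fun _ => eq_comm)

theorem specializes_iff_dvd_s10 {s t : Supernatural} : s ⤳ t ↔ t ∣ s := by
  refine ⟨fun h p => ENat.forall_natCast_le_iff_le.1 fun k hk => ?_, fun h => ?_⟩
  · exact natToSuper_primePow_dvd_iff.1 <|
      h.mem_open (isOpen_basicOpen _) (natToSuper_primePow_dvd_iff.2 hk)
  · refine specializes_iff_forall_open.2 fun U hU htU => ?_
    obtain ⟨_, ⟨n, rfl⟩, htn, hnU⟩ :=
      isTopologicalBasis_basicOpen.exists_subset_of_mem_open htU hU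
    exact hnU fun p => (htn p).trans (h p)

theorem isCompact_basicOpen (n : ℕ+) : IsCompact (basicOpen n) := by
  have : basicOpen n = nhdsKer {natToSuper n} :=
    ext fun _ => specializes_iff_dvd_s10.symm.trans mem_nhdsKer_singleton.symm
  exact this ▸ isCompact_singleton.nhdsKer

theorem inter_basicOpen_nonempty_of_primePow {S : Set Supernatural} (hS : IsIrreducible S)
    (n : ℕ+)
    (hSp : ∀ p : Nat.Primes, (S ∩ basicOpen ((p : ℕ+) ^ (n : ℕ).factorization p)).Nonempty) :
    (S ∩ basicOpen n).Nonempty := by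
  obtain ⟨s, hsS, hs⟩ := hS.inter_biInter_nonempty ((n : ℕ).primeFactors.subtype Nat.Prime)
    (fun p _ => isOpen_basicOpen _) (fun p _ => hSp p)
  refine ⟨s, hsS, fun q => ?_⟩
  by_cases hq : (q : ℕ) ∈ (n : ℕ).primeFactors
  · exact natToSuper_primePow_dvd_iff.1 (mem_iInter₂.1 hs q (Finset.mem_subtype.2 hq))
  · simp [natToSuper_apply, Finsupp.notMem_support_iff.1 (Nat.support_factorization _ ▸ hq)]

protected noncomputable def lcm (S : Set Supernatural) : Supernatural :=
  fun p => ⨆ u : S, (u : Supernatural) p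

theorem dvd_lcm {S : Set Supernatural} {u : Supernatural} (hu : u ∈ S) :
    u ∣ Supernatural.lcm S :=
  fun p => le_iSup (fun v : S => (v : Supernatural) p) ⟨u, hu⟩

theorem isGenericPoint_lcm {S : Set Supernatural} (hS : IsIrreducible S) (hS' : IsClosed S) :
    IsGenericPoint (Supernatural.lcm S) S := by
  have lcm_mem : Supernatural.lcm S ∈ S := by
    refine hS'.closure_subset (isTopologicalBasis_basicOpen.mem_closure_iff.2 ?_)
    rintro _ ⟨n, rfl⟩ hn
    rw [inter_comm]
    refine inter_basicOpen_nonempty_of_primePow hS n fun p => ?_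
    have := hS.nonempty.to_subtype
    obtain ⟨⟨u, hu⟩, hup⟩ := ENat.exists_natCast_le_of_le_iSup (hn p)
    exact ⟨u, hu, natToSuper_primePow_dvd_iff.2 hup⟩
  exact isGenericPoint_iff_specializes.2 fun s =>
    ⟨fun h => h.mem_closed hS' lcm_mem, fun hs => specializes_iff_dvd_s10.2 (dvd_lcm hs)⟩

instance : SpectralSpace Supernatural where
  t0 _ _ h := funext fun p =>
    le_antisymm (specializes_iff_dvd_s10.1 h.specializes' p) (specializes_iff_dvd_s10.1 h.specializes p)
  isCompact_univ := basicOpen_one ▸ isCompact_basicOpen 1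
  sober hS hS' := ⟨_, isGenericPoint_lcm hS hS'⟩
  toQuasiSeparatedSpace := .of_isTopologicalBasis isTopologicalBasis_basicOpen fun m n =>
    basicOpen_inter_basicOpen m n ▸ isCompact_basicOpen _
  toPrespectralSpace := .of_isTopologicalBasis' isTopologicalBasis_basicOpen isCompact_basicOpen

end Supernatural

theorem stmt10 :
    T0Space Supernatural ∧ CompactSpace Supernatural ∧
    TopologicalSpace.IsTopologicalBasis
      {U : Set Supernatural | IsCompact U ∧ IsOpen U} ∧
    (∀ U V : Set Supernatural,
      IsCompact U → IsOpen U → IsCompact V → IsOpen V → IsCompact (U ∩ V)) ∧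
    QuasiSober Supernatural := by
  refine ⟨inferInstance, inferInstance, ?_,
    fun U V hUc hUo hVc hVo => hUc.inter_of_isOpen hVc hUo hVo, inferInstance⟩
  simpa only [and_comm] using PrespectralSpace.isTopologicalBasis (X := Supernatural)
end

section
/- Let S = 𝕊 \ {1}, where 1 is the supernatural number with all exponents 0, and let K_S be the associated Grothendieck topology on the big cell 𝙳. Then the sieve on the object 1 generated by all prime numbers (equivalently, the sieve consisting of all positive natural numbers m ≠ 1) is a K_S-covering sieve, but it contains no finitely generated K_S-covering sieve. -/
/-! Every supernatural `s ≠ 1` is divisible by some prime, and primes lie in the prime sieve.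
Conversely a finitely generated subsieve has generators `≠ 1`, so a prime `p` that is not a
generator is a supernatural `≠ 1` whose divisors `1` and `p` both lie outside the subsieve. -/

open Topology

open CategoryTheory

/-- The sieve on `n` generated by the finitely many positive natural numbers in `F`:
it contains a multiple `m` of `n` iff `m` is a multiple of some element of `F`.
The finitely generated sieves on `n` are exactly the sieves of this form. -/
def genSieve (n : BigCell) (F : Finset ℕ+) : Sieve n where
  arrows m _ := ∃ m₀ ∈ F, m₀ ∣ m.d
  downward_closed := by
    rintro Y Z f ⟨m₀, hm₀, hdvd⟩ g
    exact ⟨m₀, hm₀, dvd_trans hdvd (leOfHom g)⟩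

/-- The supernatural number `1`, with all exponents `0`. -/
def oneSuper : Supernatural := fun _ => 0

/-- The sieve on the object `1` of the big cell generated by all prime numbers;
equivalently, the sieve consisting of all positive natural numbers `m ≠ 1`. -/
def primeSieve : Sieve (BigCell.of 1) where
  arrows m _ := m.d ≠ 1
  downward_closed := by
    rintro Y Z f h g hZ
    exact h ((PNat.dvd_one_iff Y.d).mp (hZ ▸ leOfHom g))

theorem natToSuper_one : natToSuper 1 = oneSuper := by
  funext p
  simp [natToSuper, oneSuper]

theorem oneSuper_dvd (s : Supernatural) : oneSuper ∣ s := fun _ => zero_le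

theorem natToSuper_prime_apply (p q : Nat.Primes) :
    natToSuper p q = if q = p then 1 else 0 := by
  simp [natToSuper, Nat.Primes.coe_pnat_nat, p.2.factorization, Finsupp.single_apply,
    Nat.Primes.coe_nat_inj, eq_comm]

theorem natToSuper_prime_ne_oneSuper (p : Nat.Primes) : natToSuper p ≠ oneSuper := fun h => by
  simpa [natToSuper_prime_apply, oneSuper] using congrFun h p

theorem natToSuper_prime_dvd {p : Nat.Primes} {s : Supernatural} (hs : s p ≠ 0) :
    natToSuper p ∣ s := fun q => by
  rw [natToSuper_prime_apply]
  split_ifs with hq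
  · exact hq ▸ Order.one_le_iff_ne_zero.mpr hs
  · exact zero_le

theorem natToSuper_dvd_natToSuper_s12 {m n : ℕ+} (h : natToSuper m ∣ natToSuper n) : m ∣ n := by
  rw [PNat.dvd_iff, ← Nat.factorization_le_iff_dvd m.ne_zero n.ne_zero]
  intro q
  by_cases hq : q.Prime
  · exact ENat.natCast_le_natCast.mp (h ⟨q, hq⟩)
  · simp [Nat.factorization_eq_zero_of_not_prime _ hq]

theorem exists_prime_natToSuper_dvd {s : Supernatural} (hs : s ≠ oneSuper) :
    ∃ p : Nat.Primes, natToSuper p ∣ s := by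
  obtain ⟨p, hp⟩ : ∃ p, s p ≠ 0 := by
    by_contra! h
    exact hs (funext h)
  exact ⟨p, natToSuper_prime_dvd hp⟩

theorem primeSieve_covers {s : Supernatural} (hs : s ≠ oneSuper) :
    ∃ (m : BigCell) (f : m ⟶ BigCell.of 1), primeSieve.arrows f ∧ natToSuper m.d ∣ s := by
  obtain ⟨p, hp⟩ := exists_prime_natToSuper_dvd hs
  refine ⟨BigCell.of p, homOfLE (one_dvd _), fun h => p.2.one_lt.ne' ?_, hp⟩
  exact congrArg PNat.val h

theorem one_notMem_of_genSieve_le_primeSieve {F : Finset ℕ+}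
    (h : genSieve (BigCell.of 1) F ≤ primeSieve) : 1 ∉ F := fun h1 =>
  h (Y := BigCell.of 1) (𝟙 _) ⟨1, h1, dvd_rfl⟩ rfl

theorem genSieve_not_covers (n : BigCell) {F : Finset ℕ+} (h1 : 1 ∉ F) :
    ∃ s : Supernatural, s ≠ oneSuper ∧
      ¬ ∃ (m : BigCell) (f : m ⟶ n), (genSieve n F).arrows f ∧ natToSuper m.d ∣ s := by
  obtain ⟨p, hpF⟩ := Infinite.exists_notMem_finset
    (F.preimage Nat.Primes.toPNat Nat.Primes.coe_pnat_injective.injOn)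
  refine ⟨natToSuper p, natToSuper_prime_ne_oneSuper p, ?_⟩
  rintro ⟨m, -, ⟨m₀, hm₀, hm₀m⟩, hmp⟩
  have hm₀p : (m₀ : ℕ) ∣ p := PNat.dvd_iff.mp (hm₀m.trans (natToSuper_dvd_natToSuper_s12 hmp))
  rcases p.2.eq_one_or_self_of_dvd _ hm₀p with h | h
  · exact h1 (PNat.coe_eq_one_iff.mp h ▸ hm₀)
  · have hm₀_eq : m₀ = p := PNat.coe_inj.mp (h.trans (Nat.Primes.coe_pnat_nat p).symm)
    exact hpF (Finset.mem_preimage.mpr (hm₀_eq ▸ hm₀))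

theorem stmt12 (J : GrothendieckTopology BigCell)
    (hJ : ∀ (n : BigCell) (L : Sieve n),
      L ∈ J.sieves n ↔ ∀ s : Supernatural, s ≠ oneSuper → natToSuper n.d ∣ s →
        ∃ (m : BigCell) (f : m ⟶ n), L.arrows f ∧ natToSuper m.d ∣ s) :
    primeSieve ∈ J.sieves (BigCell.of 1) ∧
      ¬ ∃ F : Finset ℕ+, genSieve (BigCell.of 1) F ≤ primeSieve ∧
          genSieve (BigCell.of 1) F ∈ J.sieves (BigCell.of 1) := by
  refine ⟨(hJ _ _).2 fun s hs _ => primeSieve_covers hs, ?_⟩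
  rintro ⟨F, hle, hcov⟩
  obtain ⟨s, hs, hnot⟩ := genSieve_not_covers _ (one_notMem_of_genSieve_le_primeSieve hle)
  exact hnot ((hJ _ _).1 hcov s hs (natToSuper_one ▸ oneSuper_dvd s))
end

section
/- Unions of chains of matrix algebras over ℂ are classified by their supernatural number: let A be an associative unital ℂ-algebra which is the union of an increasing chain of unital ℂ-subalgebras S₁ ⊆ S₂ ⊆ ⋯ with S_k isomorphic as a ℂ-algebra to the n_k × n_k matrix algebra M_{n_k}(ℂ), and let B similarly be the union of an increasing chain T₁ ⊆ T₂ ⊆ ⋯ with T_j ≅ M_{m_j}(ℂ). Then A and B are isomorphic as ℂ-algebras if and only if they have the same associated supernatural number, i.e., if and only if {d ∈ ℕ+ : d ∣ n_k for some k} = {d ∈ ℕ+ : d ∣ m_j for some j}. -/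
/-!
A unital representation `f` of `Mₙ(K)` on `V` splits `V` as `n` copies of the corner
`W = f(E₀₀) V`, via `v ↦ (f(E₀ᵢ) v)ᵢ`, and this splitting turns `f a` into the matrix action of `a`
on `Wⁿ`. Hence `n ∣ dim V`, and two representations on the same finite-dimensional `V` have
isomorphic corners, so they are conjugate (Skolem–Noether). Consequently `Mₙ` embeds unitally into
`Mₘ` iff `n ∣ m`, and a homomorphism out of `Mₙ` into a matrix algebra extends along any unital
embedding into an algebra that itself maps to it.

An isomorphism `A ≃ B` maps the finite-dimensional `S k` into some `T j`, so `n k ∣ m j`.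
Conversely, if the divisor sets agree, extending alternately yields a zigzag
`S k₀ → T j₀ → S k₁ → T j₁ → ⋯` whose triangles are the inclusions; gluing the two sides along
the chains gives mutually inverse homomorphisms `A → B → A`.
-/

open Matrix Module

section MatrixCorner

variable {K V ι : Type*} [CommRing K] [AddCommGroup V] [Module K V] [Fintype ι] [DecidableEq ι]

theorem Matrix.single_one_mul (i j : ι) (a : Matrix ι ι K) :
    single i j (1 : K) * a = ∑ k, a j k • single i k (1 : K) := by
  ext r c
  rw [Matrix.sum_apply, Finset.sum_eq_single c (fun k _ hk => by simp [single, hk]) (by simp)]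
  by_cases h : r = i
  · subst h; simp
  · rw [single_mul_apply_of_ne _ _ _ _ _ h]; simp [single, Ne.symm h]

variable (f : Matrix ι ι K →ₐ[K] Module.End K V) (i₀ : ι)

def matrixCorner : Submodule K V := LinearMap.range (f (single i₀ i₀ 1))

theorem apply_single_mem_matrixCorner (i : ι) (v : V) :
    f (single i₀ i 1) v ∈ matrixCorner f i₀ :=
  ⟨f (single i₀ i 1) v, by simp [← Module.End.mul_apply, ← map_mul]⟩

theorem single_apply_of_mem_matrixCorner {w : V} (hw : w ∈ matrixCorner f i₀) :
    f (single i₀ i₀ 1) w = w := by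
  obtain ⟨v, rfl⟩ := hw
  simp [← Module.End.mul_apply, ← map_mul]

def matrixCornerEquiv : V ≃ₗ[K] (ι → matrixCorner f i₀) where
  toFun v i := ⟨f (single i₀ i 1) v, apply_single_mem_matrixCorner f i₀ i v⟩
  map_add' v w := by ext; simp
  map_smul' c v := by ext; simp
  invFun c := ∑ i, f (single i i₀ 1) (c i)
  left_inv v := by
    simp [← Module.End.mul_apply, ← map_mul, ← LinearMap.sum_apply, ← map_sum, sum_single_one]
  right_inv c := by
    ext i
    simp only [map_sum, ← Module.End.mul_apply, ← map_mul]
    rw [Finset.sum_eq_single i (fun j _ hj => by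
        rw [single_mul_single_of_ne (h := hj.symm), map_zero, LinearMap.zero_apply]) (by simp),
      single_mul_single_same, mul_one, single_apply_of_mem_matrixCorner f i₀ (c i).2]

theorem matrixCornerEquiv_apply (v : V) (i : ι) :
    (matrixCornerEquiv f i₀ v i : V) = f (single i₀ i 1) v := rfl

theorem matrixCornerEquiv_map (a : Matrix ι ι K) (v : V) (i : ι) :
    matrixCornerEquiv f i₀ (f a v) i = ∑ j, a i j • matrixCornerEquiv f i₀ v j := by
  ext
  rw [matrixCornerEquiv_apply, ← Module.End.mul_apply, ← map_mul, single_one_mul]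
  simp only [map_sum, map_smul, LinearMap.sum_apply, LinearMap.smul_apply, Submodule.coe_sum,
    Submodule.coe_smul, matrixCornerEquiv_apply]

end MatrixCorner

section SkolemNoether

variable {K V ι C X : Type*} [Field K] [AddCommGroup V] [Module K V] [FiniteDimensional K V]
  [Fintype ι] [DecidableEq ι] [Ring C] [Algebra K C] [Ring X] [Algebra K X]

theorem finrank_eq_card_mul_finrank_matrixCorner (f : Matrix ι ι K →ₐ[K] Module.End K V)
    (i₀ : ι) : finrank K V = Fintype.card ι * finrank K (matrixCorner f i₀) := by
  rw [(matrixCornerEquiv f i₀).finrank_eq, finrank_pi_fintype, Finset.sum_const, smul_eq_mul,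
    Finset.card_univ]

variable [Nonempty ι]

theorem card_dvd_finrank_of_algHom (eC : C ≃ₐ[K] Matrix ι ι K) (eX : X ≃ₐ[K] Module.End K V)
    (f : C →ₐ[K] X) : Fintype.card ι ∣ finrank K V :=
  ⟨_, finrank_eq_card_mul_finrank_matrixCorner
    ((eX.toAlgHom.comp f).comp eC.symm.toAlgHom) (Classical.arbitrary ι)⟩

theorem Module.End.exists_conj_comp_eq (f g : Matrix ι ι K →ₐ[K] Module.End K V) :
    ∃ u : V ≃ₗ[K] V, (u.conjAlgEquiv K).toAlgHom.comp f = g := by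
  obtain ⟨i₀⟩ := ‹Nonempty ι›
  have hrank : finrank K (matrixCorner f i₀) = finrank K (matrixCorner g i₀) :=
    Nat.eq_of_mul_eq_mul_left Fintype.card_pos
      ((finrank_eq_card_mul_finrank_matrixCorner f i₀).symm.trans
        (finrank_eq_card_mul_finrank_matrixCorner g i₀))
  let σ := LinearEquiv.ofFinrankEq _ _ hrank
  let u := (matrixCornerEquiv f i₀).trans
    ((LinearEquiv.piCongrRight fun _ => σ).trans (matrixCornerEquiv g i₀).symm)
  have intertwine (a : Matrix ι ι K) (v : V) : u (f a v) = g a (u v) := by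
    apply (matrixCornerEquiv g i₀).injective
    ext1 i
    simp [u, matrixCornerEquiv_map]
  refine ⟨u, AlgHom.ext fun a => LinearMap.ext fun v => ?_⟩
  simp [LinearEquiv.conjAlgEquiv_apply, intertwine]

theorem exists_algEquiv_comp_eq (eC : C ≃ₐ[K] Matrix ι ι K) (eX : X ≃ₐ[K] Module.End K V)
    (f g : C →ₐ[K] X) : ∃ σ : X ≃ₐ[K] X, σ.toAlgHom.comp f = g := by
  obtain ⟨u, hu⟩ := Module.End.exists_conj_comp_eq
    ((eX.toAlgHom.comp f).comp eC.symm.toAlgHom) ((eX.toAlgHom.comp g).comp eC.symm.toAlgHom)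
  refine ⟨eX.trans ((u.conjAlgEquiv K).trans eX.symm), AlgHom.ext fun c => ?_⟩
  simpa using congrArg eX.symm (AlgHom.congr_fun hu (eC c))

theorem exists_algHom_comp_eq {D : Type*} [Ring D] [Algebra K D] (eC : C ≃ₐ[K] Matrix ι ι K)
    (eX : X ≃ₐ[K] Module.End K V) (φ : C →ₐ[K] D) (e : D →ₐ[K] X) (f : C →ₐ[K] X) :
    ∃ g : D →ₐ[K] X, g.comp φ = f := by
  obtain ⟨σ, hσ⟩ := exists_algEquiv_comp_eq eC eX (e.comp φ) f
  exact ⟨σ.toAlgHom.comp e, hσ⟩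

end SkolemNoether

section MatrixAlgebra

variable {K C D : Type*} [Field K] [Ring C] [Algebra K C] [Ring D] [Algebra K D]

theorem Matrix.nonempty_algHom_of_dvd {p q : ℕ} (h : p ∣ q) :
    Nonempty (Matrix (Fin p) (Fin p) K →ₐ[K] Matrix (Fin q) (Fin q) K) :=
  ⟨(reindexAlgEquiv K K (finProdFinEquiv.trans (finCongr (Nat.div_mul_cancel h)))).toAlgHom.comp
    ((kroneckerAlgEquiv (Fin (q / p)) (Fin p) K).toAlgHom.comp
      Algebra.TensorProduct.includeRight)⟩

theorem nonempty_algHom_of_dvd {p q : ℕ} (eC : C ≃ₐ[K] Matrix (Fin p) (Fin p) K)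
    (eD : D ≃ₐ[K] Matrix (Fin q) (Fin q) K) (h : p ∣ q) : Nonempty (C →ₐ[K] D) :=
  (Matrix.nonempty_algHom_of_dvd h).map fun f =>
    (eD.symm.toAlgHom.comp f).comp eC.toAlgHom

theorem dvd_of_algHom {p q : ℕ} [NeZero p] (eC : C ≃ₐ[K] Matrix (Fin p) (Fin p) K)
    (eD : D ≃ₐ[K] Matrix (Fin q) (Fin q) K) (f : C →ₐ[K] D) : p ∣ q := by
  simpa using card_dvd_finrank_of_algHom eC (eD.trans Matrix.toLinAlgEquiv') f

end MatrixAlgebra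

section Chain

variable {R A B : Type*} [CommSemiring R] [Semiring A] [Algebra R A] [Semiring B] [Algebra R B]

theorem Subalgebra.exists_algHom_of_monotone {S : ℕ → Subalgebra R A} (hS : Monotone S)
    (hSA : ∀ a, ∃ i, a ∈ S i) (f : ∀ i, S i →ₐ[R] B)
    (hf : ∀ i, (f (i + 1)).comp (inclusion (hS i.le_succ)) = f i) :
    ∃ F : A →ₐ[R] B, ∀ i (x : S i), F x = f i x := by
  have hf_le {i j : ℕ} (hij : i ≤ j) (x : S i) : f j (inclusion (hS hij) x) = f i x := by
    induction j, hij using Nat.le_induction with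
    | base => rfl
    | succ j hij ih =>
      rw [← ih, ← hf j, AlgHom.comp_apply, inclusion_inclusion]
  have compat (i j : ℕ) (h : S i ≤ S j) : f i = (f j).comp (inclusion h) := by
    ext x
    rw [AlgHom.comp_apply, ← hf_le (le_max_right i j), inclusion_inclusion,
      ← hf_le (le_max_left i j)]
  have htop : (⊤ : Subalgebra R A) ≤ iSup S := fun a _ =>
    let ⟨i, hi⟩ := hSA a; le_iSup S i hi
  refine ⟨(iSupLift S hS.directed_le f compat ⊤ htop).comp
    (Subalgebra.topEquiv.symm : A ≃ₐ[R] (⊤ : Subalgebra R A)).toAlgHom, fun i x => ?_⟩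
  exact iSupLift_mk S (dir := hS.directed_le) (hf := compat) x Algebra.mem_top

theorem nonempty_algEquiv_of_intertwining {S : ℕ → Subalgebra R A} {T : ℕ → Subalgebra R B}
    (hS : Monotone S) (hT : Monotone T) (hSA : ∀ a, ∃ i, a ∈ S i) (hTB : ∀ b, ∃ i, b ∈ T i)
    (φ : ∀ i, S i →ₐ[R] T i) (ψ : ∀ i, T i →ₐ[R] S (i + 1))
    (hψφ : ∀ i, (ψ i).comp (φ i) = Subalgebra.inclusion (hS i.le_succ))
    (hφψ : ∀ i, (φ (i + 1)).comp (ψ i) = Subalgebra.inclusion (hT i.le_succ)) :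
    Nonempty (A ≃ₐ[R] B) := by
  obtain ⟨F, hF⟩ := Subalgebra.exists_algHom_of_monotone hS hSA (fun i => (T i).val.comp (φ i))
    fun i => by
      ext x
      simp [← hψφ i, ← AlgHom.comp_apply (φ (i + 1)), hφψ i]
  obtain ⟨G, hG⟩ := Subalgebra.exists_algHom_of_monotone hT hTB
    (fun i => (S (i + 1)).val.comp (ψ i)) fun i => by
      ext y
      simp [← hφψ i, ← AlgHom.comp_apply (ψ (i + 1)), hψφ (i + 1)]
  refine ⟨AlgEquiv.ofAlgHom F G (AlgHom.ext fun b => ?_) (AlgHom.ext fun a => ?_)⟩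
  · obtain ⟨i, hb⟩ := hTB b
    have := hF (i + 1) (ψ i ⟨b, hb⟩)
    have := hG i ⟨b, hb⟩
    simp_all [← AlgHom.comp_apply (φ (i + 1)), hφψ i]
  · obtain ⟨i, ha⟩ := hSA a
    have := hF i ⟨a, ha⟩
    have := hG i (φ i ⟨a, ha⟩)
    simp_all [← AlgHom.comp_apply (ψ i), hψφ i]

end Chain

theorem Submodule.FG.exists_le_of_directed {R M ι : Type*} [Semiring R] [AddCommMonoid M]
    [Module R M] [Nonempty ι] {P : Submodule R M} (hP : P.FG) {N : ι → Submodule R M}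
    (hN : Directed (· ≤ ·) N) (hPN : P ≤ ⨆ i, N i) : ∃ i, P ≤ N i := by
  obtain ⟨_, ⟨i, rfl⟩, hi⟩ :=
    (CompleteLattice.isCompactElement_iff_le_of_directed_sSup_le (α := Submodule R M) P).1
      ((Submodule.fg_iff_compact P).1 hP) _ (Set.range_nonempty N) hN.directedOn_range hPN
  exact ⟨i, hi⟩

namespace MatrixChain

variable {K A B : Type*} [Field K] [Ring A] [Algebra K A] [Ring B] [Algebra K B]
  {S : ℕ → Subalgebra K A} {T : ℕ → Subalgebra K B} {n m : ℕ → ℕ+}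

theorem dvd_of_le (hS : Monotone S)
    (hSn : ∀ k, Nonempty (S k ≃ₐ[K] Matrix (Fin (n k)) (Fin (n k)) K)) {k k' : ℕ}
    (h : k ≤ k') : (n k : ℕ) ∣ n k' :=
  dvd_of_algHom (hSn k).some (hSn k').some (Subalgebra.inclusion (hS h))

theorem exists_dvd_of_algHom (hT : Monotone T) (hTB : ∀ b, ∃ j, b ∈ T j)
    (hSn : ∀ k, Nonempty (S k ≃ₐ[K] Matrix (Fin (n k)) (Fin (n k)) K))
    (hTm : ∀ j, Nonempty (T j ≃ₐ[K] Matrix (Fin (m j)) (Fin (m j)) K))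
    (Φ : A →ₐ[K] B) (k : ℕ) : ∃ j, n k ∣ m j := by
  obtain ⟨eS⟩ := hSn k
  let f := Φ.comp (S k).val
  have : Module.Finite K (S k) := Module.Finite.equiv eS.symm.toLinearEquiv
  obtain ⟨j, hj⟩ := (Submodule.fg_range f.toLinearMap).exists_le_of_directed
    (N := fun j => Subalgebra.toSubmodule (T j)) (hT.directed_le.mono_comp _ fun _ _ h => h)
    fun b _ => let ⟨j, hb⟩ := hTB b; Submodule.mem_iSup_of_mem j hb
  exact ⟨j, PNat.dvd_iff.2 <| dvd_of_algHom eS (hTm j).some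
    (f.codRestrict (T j) fun x => hj (LinearMap.mem_range_self _ x))⟩

theorem exists_algHom_comp_eq_inclusion (hS : Monotone S)
    (hSn : ∀ k, Nonempty (S k ≃ₐ[K] Matrix (Fin (n k)) (Fin (n k)) K))
    {D : Type*} [Ring D] [Algebra K D] {p : ℕ} (eD : D ≃ₐ[K] Matrix (Fin p) (Fin p) K)
    (hp : ∃ k, p ∣ n k) {k : ℕ} (φ : S k →ₐ[K] D) (N : ℕ) :
    ∃ k', ∃ hk : k ≤ k', N ≤ k' ∧
      ∃ ψ : D →ₐ[K] S k', ψ.comp φ = Subalgebra.inclusion (hS hk) := by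
  obtain ⟨k₀, hk₀⟩ := hp
  set k' := max k₀ (max N k)
  have hk : k ≤ k' := by omega
  obtain ⟨e⟩ := nonempty_algHom_of_dvd eD (hSn k').some
    (hk₀.trans (dvd_of_le hS hSn (le_max_left _ _)))
  obtain ⟨ψ, hψ⟩ := exists_algHom_comp_eq (hSn k).some
    ((hSn k').some.trans Matrix.toLinAlgEquiv') φ e (Subalgebra.inclusion (hS hk))
  exact ⟨k', hk, by omega, ψ, hψ⟩

theorem nonempty_algEquiv_of_forall_exists_dvd (hS : Monotone S) (hT : Monotone T)
    (hSA : ∀ a, ∃ k, a ∈ S k) (hTB : ∀ b, ∃ j, b ∈ T j)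
    (hSn : ∀ k, Nonempty (S k ≃ₐ[K] Matrix (Fin (n k)) (Fin (n k)) K))
    (hTm : ∀ j, Nonempty (T j ≃ₐ[K] Matrix (Fin (m j)) (Fin (m j)) K))
    (hnm : ∀ k, ∃ j, n k ∣ m j) (hmn : ∀ j, ∃ k, m j ∣ n k) : Nonempty (A ≃ₐ[K] B) := by
  let Stage := Σ k j : ℕ, S k →ₐ[K] T j
  have step (s : Stage) (N : ℕ) : ∃ s' : Stage, ∃ ψ : T s.2.1 →ₐ[K] S s'.1,
      N ≤ s'.1 ∧ N ≤ s'.2.1 ∧ ∃ hk : s.1 ≤ s'.1, ∃ hj : s.2.1 ≤ s'.2.1,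
        ψ.comp s.2.2 = Subalgebra.inclusion (hS hk) ∧
          s'.2.2.comp ψ = Subalgebra.inclusion (hT hj) := by
    obtain ⟨k, j, φ⟩ := s
    obtain ⟨k', hk, hNk, ψ, hψ⟩ := exists_algHom_comp_eq_inclusion hS hSn (hTm j).some
      ((hmn j).imp fun _ => PNat.dvd_iff.1) φ N
    obtain ⟨j', hj, hNj, φ', hφ'⟩ := exists_algHom_comp_eq_inclusion hT hTm (hSn k').some
      ((hnm k').imp fun _ => PNat.dvd_iff.1) ψ N
    exact ⟨⟨k', j', φ'⟩, ψ, hNk, hNj, hk, hj, hψ, hφ'⟩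
  choose next ψ hk_ge hj_ge hk hj hψ hφ using step
  obtain ⟨j₀, hj₀⟩ := hnm 0
  obtain ⟨φ₀⟩ := nonempty_algHom_of_dvd (hSn 0).some (hTm j₀).some (PNat.dvd_iff.1 hj₀)
  -- Step `i + 1` is taken with `N = i + 1`, which keeps both index sequences cofinal.
  let stage (i : ℕ) : Stage := Nat.rec ⟨0, j₀, φ₀⟩ (fun i s => next s (i + 1)) i
  have stage_ge (i : ℕ) : i ≤ (stage i).1 ∧ i ≤ (stage i).2.1 := by
    cases i with
    | zero => simp
    | succ i => exact ⟨hk_ge _ _, hj_ge _ _⟩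
  exact nonempty_algEquiv_of_intertwining (S := fun i => S (stage i).1)
    (T := fun i => T (stage i).2.1)
    (monotone_nat_of_le_succ fun i => hS (hk _ _)) (monotone_nat_of_le_succ fun i => hT (hj _ _))
    (fun a => let ⟨i, ha⟩ := hSA a; ⟨i, hS (stage_ge i).1 ha⟩)
    (fun b => let ⟨i, hb⟩ := hTB b; ⟨i, hT (stage_ge i).2 hb⟩)
    (fun i => (stage i).2.2) (fun i => ψ (stage i) (i + 1)) (fun i => hψ _ _) (fun i => hφ _ _)

end MatrixChain

theorem setOf_exists_dvd_subset_iff {α ι κ : Type*} [Monoid α] (n : ι → α) (m : κ → α) :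
    {d | ∃ k, d ∣ n k} ⊆ {d | ∃ j, d ∣ m j} ↔ ∀ k, ∃ j, n k ∣ m j :=
  ⟨fun h k => h ⟨k, dvd_rfl⟩, fun h _ ⟨k, hd⟩ => (h k).imp fun _ => hd.trans⟩

theorem stmt19 (A B : Type*) [Ring A] [Algebra ℂ A] [Ring B] [Algebra ℂ B]
    (S : ℕ → Subalgebra ℂ A) (T : ℕ → Subalgebra ℂ B)
    (hS : Monotone S) (hT : Monotone T)
    (hSA : ∀ a : A, ∃ k, a ∈ S k) (hTB : ∀ b : B, ∃ j, b ∈ T j)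
    (n m : ℕ → ℕ+)
    (hSn : ∀ k, Nonempty (S k ≃ₐ[ℂ] Matrix (Fin (n k)) (Fin (n k)) ℂ))
    (hTm : ∀ j, Nonempty (T j ≃ₐ[ℂ] Matrix (Fin (m j)) (Fin (m j)) ℂ)) :
    Nonempty (A ≃ₐ[ℂ] B) ↔
      {d : ℕ+ | ∃ k, d ∣ n k} = {d : ℕ+ | ∃ j, d ∣ m j} := by
  simp only [subset_antisymm_iff, setOf_exists_dvd_subset_iff]
  constructor
  · rintro ⟨Φ⟩
    exact ⟨MatrixChain.exists_dvd_of_algHom hT hTB hSn hTm Φ.toAlgHom,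
      MatrixChain.exists_dvd_of_algHom hS hSA hTm hSn Φ.symm.toAlgHom⟩
  · rintro ⟨hnm, hmn⟩
    exact MatrixChain.nonempty_algEquiv_of_forall_exists_dvd hS hT hSA hTB hSn hTm hnm hmn
end
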